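/- arXiv:1810.00118 — 5 statements merged into one kernel-verified Lean document; each statement's English description precedes it below -/
import Mathlib

section
/- Let A be a real m×n matrix and let M be the symmetric (m+n)×(m+n) block matrix M = [[ (1/μ) I_n , -Aᵀ ], [ -A , (1/τ) I_m ]] with μ, τ > 0. If μ τ ‖A‖² < 1 (operator 2-norm of A), then M is positive definite. -/
/-! Write `x = (u, v)`. The quadratic form of the block matrix is
`‖u‖²/μ + ‖v‖²/τ - 2⟪A u, v⟫ ≥ a²/μ + b²/τ - 2‖A‖ab` with `a = ‖u‖`, `b = ‖v‖`, and completing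
the square, `μ` times the right-hand side is `(a - μ‖A‖b)² + (μ/τ) b² (1 - μτ‖A‖²)`, which is
positive unless `a = b = 0`. -/

/-- The operator 2-norm (spectral norm) of a real `m × n` matrix. -/
noncomputable def opNorm {m n : ℕ} (A : Matrix (Fin m) (Fin n) ℝ) : ℝ :=
  ‖LinearMap.toContinuousLinearMap (Matrix.toEuclideanLin A)‖

open Matrix WithLp

lemma sq_div_add_sq_div_sub_mul_pos {μ τ N a b : ℝ} (hμ : 0 < μ) (hτ : 0 < τ)
    (h : μ * τ * N ^ 2 < 1) (hab : a ≠ 0 ∨ b ≠ 0) :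
    0 < a ^ 2 / μ + b ^ 2 / τ - 2 * (N * a * b) := by
  have hsq : μ * (a ^ 2 / μ + b ^ 2 / τ - 2 * (N * a * b)) =
      (a - μ * N * b) ^ 2 + μ / τ * b ^ 2 * (1 - μ * τ * N ^ 2) := by
    field_simp
    ring
  refine pos_of_mul_pos_right (hsq ▸ ?_) hμ.le
  have hgap : 0 < 1 - μ * τ * N ^ 2 := sub_pos.2 h
  rcases eq_or_ne b 0 with rfl | hb
  · have ha : a ≠ 0 := by simpa using hab
    norm_num
    positivity
  · have hpos : 0 < μ / τ * b ^ 2 * (1 - μ * τ * N ^ 2) := by positivity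
    positivity

lemma sq_norm_div_add_sq_norm_div_sub_inner_pos {E F : Type*}
    [NormedAddCommGroup E] [InnerProductSpace ℝ E] [NormedAddCommGroup F] [InnerProductSpace ℝ F]
    (T : E →L[ℝ] F) {μ τ : ℝ} (hμ : 0 < μ) (hτ : 0 < τ) (h : μ * τ * ‖T‖ ^ 2 < 1)
    {u : E} {v : F} (huv : u ≠ 0 ∨ v ≠ 0) :
    0 < ‖u‖ ^ 2 / μ + ‖v‖ ^ 2 / τ - 2 * inner ℝ (T u) v := by
  have hinner : inner ℝ (T u) v ≤ ‖T‖ * ‖u‖ * ‖v‖ :=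
    (real_inner_le_norm _ _).trans (mul_le_mul_of_nonneg_right (T.le_opNorm u) (norm_nonneg v))
  have := sq_div_add_sq_div_sub_mul_pos hμ hτ h (a := ‖u‖) (b := ‖v‖) (by simpa using huv)
  linarith

lemma dotProduct_fromBlocks_smul_one_mulVec {l k : Type*} [Fintype l] [Fintype k]
    [DecidableEq l] [DecidableEq k] (A : Matrix k l ℝ) (a b : ℝ) (u : l → ℝ) (v : k → ℝ) :
    Sum.elim u v ⬝ᵥ (fromBlocks (a • 1) (-Aᵀ) (-A) (b • 1) *ᵥ Sum.elim u v) =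
      a * (u ⬝ᵥ u) + b * (v ⬝ᵥ v) - 2 * (v ⬝ᵥ A *ᵥ u) := by
  simp only [fromBlocks_mulVec, Sum.elim_comp_inl, Sum.elim_comp_inr, sumElim_dotProduct_sumElim,
    smul_mulVec, one_mulVec, neg_mulVec, mulVec_transpose, dotProduct_add, dotProduct_smul,
    dotProduct_neg, smul_eq_mul, dotProduct_mulVec]
  rw [dotProduct_comm u (v ᵥ* A)]
  ring

/-- If `μ, τ > 0` and `μ τ ‖A‖² < 1` (operator 2-norm), then the block matrix
`M = [[(1/μ) I, -Aᵀ], [-A, (1/τ) I]]` is positive definite. -/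
theorem stmt2 {m n : ℕ} (A : Matrix (Fin m) (Fin n) ℝ) (μ τ : ℝ)
    (hμ : 0 < μ) (hτ : 0 < τ) (h : μ * τ * (opNorm A) ^ 2 < 1) :
    (Matrix.fromBlocks ((1 / μ) • (1 : Matrix (Fin n) (Fin n) ℝ)) (-A.transpose)
      (-A) ((1 / τ) • (1 : Matrix (Fin m) (Fin m) ℝ))).PosDef := by
  refine posDef_iff_dotProduct_mulVec.2 ⟨?_, fun x hx => ?_⟩
  · exact (isHermitian_one.smul (.all _)).fromBlocks (by simp) (isHermitian_one.smul (.all _))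
  · obtain ⟨u, v, rfl⟩ : ∃ u v, x = Sum.elim u v := ⟨_, _, (Sum.elim_comp_inl_inr x).symm⟩
    have huv : toLp 2 u ≠ 0 ∨ toLp 2 v ≠ 0 := by
      contrapose! hx
      simp_all
    have hnorm {k : ℕ} (w : Fin k → ℝ) : ‖toLp 2 w‖ ^ 2 = w ⬝ᵥ w := by
      rw [← real_inner_self_eq_norm_sq, EuclideanSpace.inner_toLp_toLp, star_trivial]
    have hinner : inner ℝ (toEuclideanLin A (toLp 2 u)) (toLp 2 v) = v ⬝ᵥ A *ᵥ u := rfl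
    have key := sq_norm_div_add_sq_norm_div_sub_inner_pos _ hμ hτ h huv
    rw [LinearMap.coe_toContinuousLinearMap', hinner, hnorm, hnorm] at key
    rw [star_trivial, dotProduct_fromBlocks_smul_one_mulVec]
    linarith [one_div_mul_eq_div μ (u ⬝ᵥ u), one_div_mul_eq_div τ (v ⬝ᵥ v)]
end

section
/- Consider the piecewise multilinear coarse-to-fine interpolation operator for scalar grid functions: for the 1D grid refinement from step 2h to step h on [0,1], define (Iφ)(x) = φ(x) if x is a coarse grid point, and (Iφ)(x) = (φ(x−h) + φ(x+h))/2 otherwise. Then the weighted L² norms satisfy ‖Iφ‖²_{L²,h} ≤ ‖φ‖²_{L²,2h}, where ‖ψ‖²_{L²,s} = Σ_x ψ(x)² s. -/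
open scoped BigOperators

/-- 1D coarse-to-fine interpolation from the coarse grid `{0, 2h, …, 1}` (points
`Fin (M+1)`) to the fine grid `{0, h, …, 1}` (points `Fin (2M+1)`): coarse points keep
their value, midpoints get the average of the two neighbours. -/
noncomputable def interp1D (M : ℕ) (φ : Fin (M + 1) → ℝ) : Fin (2 * M + 1) → ℝ := fun i =>
  if hodd : (i : ℕ) % 2 = 1 then
    (φ ⟨(i : ℕ) / 2, by have := i.isLt; omega⟩ +
      φ ⟨(i : ℕ) / 2 + 1, by have := i.isLt; omega⟩) / 2
  else
    φ ⟨(i : ℕ) / 2, by have := i.isLt; omega⟩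

/-- The 1D interpolation is nonexpansive with respect to the weighted `L²` norms:
`‖Iφ‖²_{L²,h} ≤ ‖φ‖²_{L²,2h}`. -/
theorem stmt6 (M : ℕ) (h : ℝ) (hh : 0 < h) (φ : Fin (M + 1) → ℝ) :
    ∑ i : Fin (2 * M + 1), (interp1D M φ i) ^ 2 * h
      ≤ ∑ j : Fin (M + 1), (φ j) ^ 2 * (2 * h) := by
  set ψ : ℕ → ℝ := fun n => if hn : n ≤ M then φ ⟨n, Nat.lt_succ_of_le hn⟩ else 0 with hψ
  have key : ∀ N : ℕ,
      ∑ i ∈ Finset.range (2 * N + 1),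
        (if i % 2 = 1 then ((ψ (i / 2) + ψ (i / 2 + 1)) / 2) ^ 2 else ψ (i / 2) ^ 2) * h
      ≤ ∑ j ∈ Finset.range (N + 1), ψ j ^ 2 * (2 * h)
          - (ψ 0 ^ 2 + ψ N ^ 2) / 2 * h := by
    intro N
    induction N with
    | zero => simp; nlinarith [sq_nonneg (ψ 0)]
    | succ N ih =>
      have h1 : 2 * (N + 1) + 1 = (2 * N + 1) + 1 + 1 := by ring
      rw [h1, Finset.sum_range_succ, Finset.sum_range_succ, Finset.sum_range_succ,
        Finset.sum_range_succ]
      rw [Finset.sum_range_succ] at ih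
      have e1 : (2 * N + 1) % 2 = 1 := by omega
      have e2 : (2 * N + 1 + 1) % 2 = 0 := by omega
      have e3 : (2 * N + 1) / 2 = N := by omega
      have e4 : (2 * N + 1 + 1) / 2 = N + 1 := by omega
      rw [e1, if_pos rfl, e3, e2]
      simp only [e4, Nat.zero_ne_one, if_false]
      have havg : ((ψ N + ψ (N + 1)) / 2) ^ 2 ≤ (ψ N ^ 2 + ψ (N + 1) ^ 2) / 2 := by
        nlinarith [sq_nonneg (ψ N - ψ (N + 1))]
      nlinarith [ih, mul_le_mul_of_nonneg_right havg hh.le]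
  have lhs_eq : ∑ i : Fin (2 * M + 1), (interp1D M φ i) ^ 2 * h
      = ∑ i ∈ Finset.range (2 * M + 1),
        (if i % 2 = 1 then ((ψ (i / 2) + ψ (i / 2 + 1)) / 2) ^ 2 else ψ (i / 2) ^ 2) * h := by
    rw [← Fin.sum_univ_eq_sum_range]
    refine Finset.sum_congr rfl fun i _ => ?_
    have hi := i.isLt
    unfold interp1D
    by_cases hodd : (i : ℕ) % 2 = 1
    · rw [dif_pos hodd, if_pos hodd]
      have hle : (i : ℕ) / 2 + 1 ≤ M := by omega
      have hle' : (i : ℕ) / 2 ≤ M := by omega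
      rw [hψ]
      simp only [dif_pos hle, dif_pos hle']
    · rw [dif_neg hodd, if_neg hodd]
      have hle' : (i : ℕ) / 2 ≤ M := by omega
      rw [hψ]
      simp only [dif_pos hle']
  have rhs_eq : ∑ j : Fin (M + 1), (φ j) ^ 2 * (2 * h)
      = ∑ j ∈ Finset.range (M + 1), ψ j ^ 2 * (2 * h) := by
    rw [← Fin.sum_univ_eq_sum_range]
    refine Finset.sum_congr rfl fun j _ => ?_
    have hj := j.isLt
    have hle : (j : ℕ) ≤ M := by omega
    rw [hψ]
    simp only [dif_pos hle]
  rw [lhs_eq, rhs_eq]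
  have := key M
  nlinarith [sq_nonneg (ψ 0), sq_nonneg (ψ M), mul_nonneg (add_nonneg (sq_nonneg (ψ 0)) (sq_nonneg (ψ M))) hh.le]
end

section
/- Let I be the d-dimensional averaging interpolation from grid Ω^{2h} to Ω^h defined pointwise by (Iφ)(x) = (1/|N(x)|) Σ_{y ∈ N(x)} φ(y), where N(x) is the set of coarse grid points y agreeing with x in all coordinates lying on the coarse grid and differing by at most h in the remaining coordinates. Then for every φ: Ω^{2h} → R, ‖Iφ‖²_{L²} ≤ ‖φ‖²_{L²}, where the L² norms carry the respective volume weights h^d and (2h)^d. -/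
open scoped BigOperators

/-- The partial neighbourhood `N(x)` of a fine grid point `x ∈ Ω^h = {0,…,2M}^d`:
coarse grid points `y ∈ Ω^{2h} = {0,…,M}^d` whose coordinates (in units of `h`, i.e. `2 y_j`)
agree with `x_j` wherever `x_j` lies on the coarse grid and differ by at most `h` elsewhere,
i.e. `|2 y_j − x_j| ≤ 1` for every `j`. -/
def coarseNbr {d M : ℕ} (x : Fin d → Fin (2 * M + 1)) : Finset (Fin d → Fin (M + 1)) :=
  Finset.univ.filter (fun y => ∀ j, |2 * ((y j : ℕ) : ℤ) - ((x j : ℕ) : ℤ)| ≤ 1)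

/-- The d-dimensional averaging interpolation from `Ω^{2h}` to `Ω^h`:
`(Iφ)(x) = (1/|N(x)|) Σ_{y ∈ N(x)} φ(y)`. -/
noncomputable def interpD {d M : ℕ} (φ : (Fin d → Fin (M + 1)) → ℝ)
    (x : Fin d → Fin (2 * M + 1)) : ℝ :=
  (∑ y ∈ coarseNbr x, φ y) / (coarseNbr x).card

/-- coarse neighbours of a single fine coordinate -/
def Tset (M : ℕ) (a : Fin (2 * M + 1)) : Finset (Fin (M + 1)) :=
  Finset.univ.filter (fun b => |2 * ((b : ℕ) : ℤ) - ((a : ℕ) : ℤ)| ≤ 1)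

/-- fine neighbours of a single coarse coordinate -/
def Sset (M : ℕ) (b : Fin (M + 1)) : Finset (Fin (2 * M + 1)) :=
  Finset.univ.filter (fun a => |2 * ((b : ℕ) : ℤ) - ((a : ℕ) : ℤ)| ≤ 1)

lemma coarseNbr_eq_piFinset {d M : ℕ} (x : Fin d → Fin (2 * M + 1)) :
    coarseNbr x = Fintype.piFinset (fun j => Tset M (x j)) := by
  ext y; simp [coarseNbr, Tset, Fintype.mem_piFinset]

lemma card_Tset_even {M : ℕ} (a : Fin (2 * M + 1)) (ha : Even (a : ℕ)) :
    (Tset M a).card = 1 := by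
  have hle : (a : ℕ) / 2 ≤ M := by omega
  have : Tset M a = {⟨(a : ℕ) / 2, by omega⟩} := by
    ext b
    simp only [Tset, Finset.mem_filter, Finset.mem_univ, true_and, Finset.mem_singleton,
      Fin.ext_iff, abs_le]
    obtain ⟨k, hk⟩ := ha
    omega
  rw [this, Finset.card_singleton]

lemma card_Tset_odd {M : ℕ} (a : Fin (2 * M + 1)) (ha : ¬ Even (a : ℕ)) :
    (Tset M a).card = 2 := by
  have h1 : (a : ℕ) < 2 * M + 1 := a.isLt
  have h2 : (a : ℕ) % 2 = 1 := Nat.not_even_iff.mp ha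
  have : Tset M a = {⟨(a : ℕ) / 2, by omega⟩, ⟨(a : ℕ) / 2 + 1, by omega⟩} := by
    ext b
    simp only [Tset, Finset.mem_filter, Finset.mem_univ, true_and, Finset.mem_insert,
      Finset.mem_singleton, Fin.ext_iff, abs_le]
    omega
  rw [this]
  rw [Finset.card_insert_of_notMem (by simp [Fin.ext_iff]), Finset.card_singleton]

lemma card_Tset_pos {M : ℕ} (a : Fin (2 * M + 1)) : 0 < (Tset M a).card := by
  by_cases ha : Even (a : ℕ)
  · rw [card_Tset_even a ha]; norm_num
  · rw [card_Tset_odd a ha]; norm_num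

lemma inv_card_Tset_le {M : ℕ} (a : Fin (2 * M + 1)) :
    ((Tset M a).card : ℝ)⁻¹ ≤ if Even (a : ℕ) then 1 else 1 / 2 := by
  by_cases ha : Even (a : ℕ)
  · rw [card_Tset_even a ha]; simp [ha]
  · rw [card_Tset_odd a ha]; simp [ha]

/-- key per-coordinate weight bound -/
lemma weight_le_two {M : ℕ} (b : Fin (M + 1)) :
    ∑ a ∈ Sset M b, ((Tset M a).card : ℝ)⁻¹ ≤ 2 := by
  have step1 : ∑ a ∈ Sset M b, ((Tset M a).card : ℝ)⁻¹
      ≤ ∑ a ∈ Sset M b, (if Even (a : ℕ) then (1 : ℝ) else 1 / 2) :=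
    Finset.sum_le_sum (fun a _ => inv_card_Tset_le a)
  refine step1.trans ?_
  rw [Finset.sum_ite]
  have hev : ((Sset M b).filter (fun a : Fin (2 * M + 1) => Even (a : ℕ))).card ≤ 1 := by
    apply Finset.card_le_one.mpr
    intro a1 h1 a2 h2
    simp only [Finset.mem_filter, Sset, Finset.mem_univ, true_and, abs_le] at h1 h2
    obtain ⟨⟨hx1, hy1⟩, k1, hk1⟩ := h1
    obtain ⟨⟨hx2, hy2⟩, k2, hk2⟩ := h2
    apply Fin.ext; omega
  have hod : ((Sset M b).filter (fun a : Fin (2 * M + 1) => ¬ Even (a : ℕ))).card ≤ 2 := by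
    have : ((Sset M b).filter (fun a : Fin (2 * M + 1) => ¬ Even (a : ℕ))) ⊆
        Finset.univ.filter (fun a : Fin (2 * M + 1) =>
          (a : ℕ) = 2 * (b : ℕ) - 1 ∨ (a : ℕ) = 2 * (b : ℕ) + 1) := by
      intro a ha
      simp only [Finset.mem_filter, Sset, Finset.mem_univ, true_and, abs_le,
        Nat.not_even_iff] at ha ⊢
      omega
    refine (Finset.card_le_card this).trans ?_
    have : Finset.univ.filter (fun a : Fin (2 * M + 1) =>
          (a : ℕ) = 2 * (b : ℕ) - 1 ∨ (a : ℕ) = 2 * (b : ℕ) + 1) ⊆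
        {⟨2 * (b : ℕ) - 1, by omega⟩, ⟨min (2 * (b : ℕ) + 1) (2 * M), by omega⟩} := by
      intro a ha
      simp only [Finset.mem_filter, Finset.mem_univ, true_and] at ha
      have := a.isLt
      simp only [Finset.mem_insert, Finset.mem_singleton, Fin.ext_iff]
      omega
    refine (Finset.card_le_card this).trans ?_
    exact (Finset.card_insert_le _ _).trans (by simp)
  calc ∑ _ ∈ (Sset M b).filter (fun a : Fin (2 * M + 1) => Even (a : ℕ)), (1 : ℝ)
        + ∑ _ ∈ (Sset M b).filter (fun a : Fin (2 * M + 1) => ¬ Even (a : ℕ)), (1 / 2 : ℝ)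
      = ((Sset M b).filter (fun a : Fin (2 * M + 1) => Even (a : ℕ))).card
        + ((Sset M b).filter (fun a : Fin (2 * M + 1) => ¬ Even (a : ℕ))).card * (1 / 2) := by
        simp [Finset.sum_const, nsmul_eq_mul]
    _ ≤ 1 + 2 * (1 / 2) := by
        have h1 : (((Sset M b).filter (fun a : Fin (2 * M + 1) => Even (a : ℕ))).card : ℝ) ≤ 1 := by
          exact_mod_cast Nat.cast_le.mpr hev
        have h2 : (((Sset M b).filter (fun a : Fin (2 * M + 1) => ¬ Even (a : ℕ))).card : ℝ) ≤ 2 := by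
          exact_mod_cast Nat.cast_le.mpr hod
        nlinarith
    _ = 2 := by norm_num

lemma card_coarseNbr {d M : ℕ} (x : Fin d → Fin (2 * M + 1)) :
    (coarseNbr x).card = ∏ j, (Tset M (x j)).card := by
  rw [coarseNbr_eq_piFinset, Fintype.card_piFinset]

/-- The averaging interpolation is nonexpansive in the weighted `L²` norms:
`Σ_{x ∈ Ω^h} (Iφ)(x)² h^d ≤ Σ_{y ∈ Ω^{2h}} φ(y)² (2h)^d`. -/
theorem stmt7 {d M : ℕ} (h : ℝ) (hh : 0 < h) (φ : (Fin d → Fin (M + 1)) → ℝ) :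
    ∑ x : Fin d → Fin (2 * M + 1), (interpD φ x) ^ 2 * h ^ d
      ≤ ∑ y : Fin d → Fin (M + 1), (φ y) ^ 2 * (2 * h) ^ d := by
  have key : ∑ x : Fin d → Fin (2 * M + 1), (interpD φ x) ^ 2
      ≤ ∑ y : Fin d → Fin (M + 1), (φ y) ^ 2 * 2 ^ d := by
    -- Jensen on each point
    have jensen : ∀ x : Fin d → Fin (2 * M + 1), (interpD φ x) ^ 2
        ≤ ∑ y ∈ coarseNbr x, (φ y) ^ 2 * ((coarseNbr x).card : ℝ)⁻¹ := by
      intro x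
      have hc : 0 < ((coarseNbr x).card : ℝ) := by
        have : 0 < (coarseNbr x).card := by
          rw [card_coarseNbr]; exact Finset.prod_pos (fun j _ => card_Tset_pos (x j))
        exact_mod_cast this
      have hcs := sq_sum_le_card_mul_sum_sq (s := coarseNbr x) (f := φ)
      rw [interpD, div_pow, ← Finset.sum_mul]
      rw [div_le_iff₀ (by positivity)]
      calc (∑ y ∈ coarseNbr x, φ y) ^ 2
          ≤ (coarseNbr x).card * ∑ y ∈ coarseNbr x, (φ y) ^ 2 := hcs
        _ = (∑ y ∈ coarseNbr x, (φ y) ^ 2) * ((coarseNbr x).card : ℝ)⁻¹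
              * ((coarseNbr x).card : ℝ) ^ 2 := by field_simp
    refine (Finset.sum_le_sum (fun x _ => jensen x)).trans ?_
    -- swap the order of summation
    have swap : ∑ x : Fin d → Fin (2 * M + 1),
        ∑ y ∈ coarseNbr x, (φ y) ^ 2 * ((coarseNbr x).card : ℝ)⁻¹
        = ∑ y : Fin d → Fin (M + 1), (φ y) ^ 2 *
            ∑ x ∈ Finset.univ.filter (fun x => y ∈ coarseNbr x),
              ((coarseNbr x).card : ℝ)⁻¹ := by
      simp_rw [Finset.mul_sum]
      rw [Finset.sum_comm' (s := Finset.univ) (t := fun x => coarseNbr x)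
        (t' := Finset.univ) (s' := fun y => Finset.univ.filter (fun x => y ∈ coarseNbr x))]
      intro x y
      simp
    rw [swap]
    apply Finset.sum_le_sum
    intro y _
    have hW : ∑ x ∈ Finset.univ.filter (fun x => y ∈ coarseNbr x),
        ((coarseNbr x).card : ℝ)⁻¹ ≤ 2 ^ d := by
      have hfil : Finset.univ.filter (fun x => y ∈ coarseNbr x)
          = Fintype.piFinset (fun j => Sset M (y j)) := by
        ext x
        simp [coarseNbr, Sset, Fintype.mem_piFinset]
      have hinv : ∀ x : Fin d → Fin (2 * M + 1),
          ((coarseNbr x).card : ℝ)⁻¹ = ∏ j, ((Tset M (x j)).card : ℝ)⁻¹ := by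
        intro x
        rw [card_coarseNbr]
        push_cast
        rw [← Finset.prod_inv_distrib]
      rw [hfil]
      calc ∑ x ∈ Fintype.piFinset (fun j => Sset M (y j)), ((coarseNbr x).card : ℝ)⁻¹
          = ∑ x ∈ Fintype.piFinset (fun j => Sset M (y j)),
              ∏ j, ((Tset M (x j)).card : ℝ)⁻¹ := by
            exact Finset.sum_congr rfl (fun x _ => hinv x)
        _ = ∏ j, ∑ a ∈ Sset M (y j), ((Tset M a).card : ℝ)⁻¹ :=
            (Finset.prod_univ_sum (fun j => Sset M (y j)) (fun _ a => ((Tset M a).card : ℝ)⁻¹)).symm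
        _ ≤ ∏ _j : Fin d, (2 : ℝ) := by
            apply Finset.prod_le_prod
            · intro j _
              exact Finset.sum_nonneg (fun a _ => by positivity)
            · intro j _
              exact weight_le_two (y j)
        _ = 2 ^ d := by simp
    calc (φ y) ^ 2 * ∑ x ∈ Finset.univ.filter (fun x => y ∈ coarseNbr x),
          ((coarseNbr x).card : ℝ)⁻¹
        ≤ (φ y) ^ 2 * 2 ^ d := by
          apply mul_le_mul_of_nonneg_left hW (by positivity)
      _ = (φ y) ^ 2 * 2 ^ d := rfl
  calc ∑ x : Fin d → Fin (2 * M + 1), (interpD φ x) ^ 2 * h ^ d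
      = (∑ x : Fin d → Fin (2 * M + 1), (interpD φ x) ^ 2) * h ^ d := by
        rw [Finset.sum_mul]
    _ ≤ (∑ y : Fin d → Fin (M + 1), (φ y) ^ 2 * 2 ^ d) * h ^ d := by
        apply mul_le_mul_of_nonneg_right key (by positivity)
    _ = ∑ y : Fin d → Fin (M + 1), (φ y) ^ 2 * (2 * h) ^ d := by
        rw [Finset.sum_mul]
        apply Finset.sum_congr rfl
        intro y _
        rw [mul_pow]; ring
end

section
/- Let T: H → H be firmly nonexpansive with fixed point z*, and z^{k+1} = T z^k. Then for every k ≥ 1, ‖z^{k+1} − z^k‖² ≤ (1/k) ‖z^0 − z*‖². -/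
open scoped RealInnerProductSpace

/-- O(1/k) rate of the fixed-point residual: for a firmly nonexpansive `T` with fixed point
`z*` and iteration `z^{k+1} = T z^k`, one has `‖z^{k+1} − z^k‖² ≤ (1/k)‖z⁰ − z*‖²` for `k ≥ 1`. -/
theorem stmt10 {H : Type*} [NormedAddCommGroup H] [InnerProductSpace ℝ H] [CompleteSpace H]
    (T : H → H) (hT : ∀ x y, ‖T x - T y‖ ^ 2 ≤ ⟪T x - T y, x - y⟫)
    (zstar : H) (hstar : T zstar = zstar)
    (z : ℕ → H) (hz : ∀ k, z (k + 1) = T (z k)) (k : ℕ) (hk : 1 ≤ k) :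
    ‖z (k + 1) - z k‖ ^ 2 ≤ (1 / (k : ℝ)) * ‖z 0 - zstar‖ ^ 2 := by
  -- Fejér inequality: ‖z(i+1) − z*‖² + ‖z(i+1) − z i‖² ≤ ‖z i − z*‖²
  have key : ∀ i : ℕ, ‖z (i+1) - zstar‖ ^ 2 + ‖z (i+1) - z i‖ ^ 2 ≤ ‖z i - zstar‖ ^ 2 := by
    intro i
    have h := hT (z i) zstar
    rw [hstar, ← hz i] at h
    have hpol : ‖(z (i+1) - zstar) - (z i - zstar)‖ ^ 2
        = ‖z (i+1) - zstar‖ ^ 2 - 2 * ⟪z (i+1) - zstar, z i - zstar⟫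
          + ‖z i - zstar‖ ^ 2 := by
      rw [@norm_sub_sq_real]
    have hab : (z (i+1) - zstar) - (z i - zstar) = z (i+1) - z i := by abel
    rw [hab] at hpol
    linarith
  -- residual monotonicity
  have mono : ∀ i : ℕ, ‖z (i+2) - z (i+1)‖ ^ 2 ≤ ‖z (i+1) - z i‖ ^ 2 := by
    intro i
    have h := hT (z (i+1)) (z i)
    rw [← hz (i+1), ← hz i] at h
    have hcs := real_inner_le_norm (z (i+2) - z (i+1)) (z (i+1) - z i)
    have h1 : ‖z (i+2) - z (i+1)‖ ^ 2 ≤ ‖z (i+2) - z (i+1)‖ * ‖z (i+1) - z i‖ :=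
      le_trans h hcs
    nlinarith [norm_nonneg (z (i+2) - z (i+1)), norm_nonneg (z (i+1) - z i)]
  -- residual monotone in general
  have mono' : ∀ n : ℕ, ∀ i ≤ n, ‖z (n+1) - z n‖ ^ 2 ≤ ‖z (i+1) - z i‖ ^ 2 := by
    intro n
    induction n with
    | zero => intro i hi; interval_cases i; exact le_refl _
    | succ n ih =>
      intro i hi
      rcases Nat.lt_or_ge i (n+1) with h | h
      · exact le_trans (mono n) (ih i (Nat.lt_succ_iff.mp h))
      · have : i = n + 1 := le_antisymm hi h
        subst this; exact le_refl _
  -- sum bound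
  have sum_bound : (k : ℝ) * ‖z (k+1) - z k‖ ^ 2 ≤ ‖z 0 - zstar‖ ^ 2 := by
    have h1 : (k : ℝ) * ‖z (k+1) - z k‖ ^ 2
        ≤ ∑ i ∈ Finset.range k, ‖z (i+1) - z i‖ ^ 2 := by
      calc (k : ℝ) * ‖z (k+1) - z k‖ ^ 2
          = ∑ _i ∈ Finset.range k, ‖z (k+1) - z k‖ ^ 2 := by
            rw [Finset.sum_const, Finset.card_range, nsmul_eq_mul]
        _ ≤ ∑ i ∈ Finset.range k, ‖z (i+1) - z i‖ ^ 2 :=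
            Finset.sum_le_sum fun i hi => mono' k i (le_of_lt (Finset.mem_range.mp hi))
    have h2 : ∑ i ∈ Finset.range k, ‖z (i+1) - z i‖ ^ 2
        ≤ ∑ i ∈ Finset.range k, (‖z i - zstar‖ ^ 2 - ‖z (i+1) - zstar‖ ^ 2) :=
      Finset.sum_le_sum fun i _ => by linarith [key i]
    have h3 : ∑ i ∈ Finset.range k, (‖z i - zstar‖ ^ 2 - ‖z (i+1) - zstar‖ ^ 2)
        = ‖z 0 - zstar‖ ^ 2 - ‖z k - zstar‖ ^ 2 := by
      rw [Finset.sum_range_sub' (fun i => ‖z i - zstar‖ ^ 2)]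
    nlinarith [sq_nonneg ‖z k - zstar‖]
  have hkpos : (0 : ℝ) < k := by exact_mod_cast hk
  rw [div_mul_eq_mul_div, one_mul, le_div_iff₀ hkpos]
  linarith [sum_bound]
end

section
/- Suppose an iterative scheme on level l satisfies the residual bound R^k_{h_l} ≤ (6√d / (k h_l)) · ‖z⁰_{h_l} − z*_{h_l}‖²_{L²}, and the initialization satisfies ‖z⁰_{h_l} − z*_{h_l}‖²_{L²} ≤ 4 C₂ (2 h_l)^r (obtained from a nonexpansive interpolation of an approximate coarse solution within C₂ h_{l−1}^r of a coarse optimum, plus coarse-to-fine solution closeness C₂ h_{l−1}^r, via the inequality ‖a+b‖² ≤ 2‖a‖² + 2‖b‖²). Then R^k_{h_l} ≤ 24·2^r C₂ √d / (k h_l^{1−r}), so the condition R^k_{h_l} ≤ ε_l holds for all k ≥ 24·2^r C₂ √d / (ε_l h_l^{1−r}). -/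
/-- Multilevel per-level iteration bound: if the residual satisfies
`R^k ≤ (6√d/(k h_l))·E` with initialization error `E = ‖z⁰−z*‖²_{L²} ≤ 4 C₂ (2h_l)^r`,
then `R^k ≤ 24·2^r C₂ √d/(k h_l^{1−r})`, so `R^k ≤ ε_l` holds for all
`k ≥ 24·2^r C₂ √d/(ε_l h_l^{1−r})`. -/
theorem stmt15 (d : ℕ) (hl C₂ r εl E : ℝ) (hhl : 0 < hl) (hC : 0 ≤ C₂) (hε : 0 < εl)
    (R : ℕ → ℝ)
    (hR : ∀ k : ℕ, 1 ≤ k → R k ≤ 6 * Real.sqrt d / (k * hl) * E)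
    (hE : E ≤ 4 * C₂ * (2 * hl) ^ r) :
    (∀ k : ℕ, 1 ≤ k →
      R k ≤ 24 * 2 ^ r * C₂ * Real.sqrt d / (k * hl ^ ((1 : ℝ) - r))) ∧
    (∀ k : ℕ, 1 ≤ k →
      24 * 2 ^ r * C₂ * Real.sqrt d / (εl * hl ^ ((1 : ℝ) - r)) ≤ k → R k ≤ εl) := by
  have hsd : (0:ℝ) ≤ Real.sqrt d := Real.sqrt_nonneg _
  have key : ∀ k : ℕ, 1 ≤ k →
      R k ≤ 24 * 2 ^ r * C₂ * Real.sqrt d / (k * hl ^ ((1 : ℝ) - r)) := by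
    intro k hk
    have hkpos : (0:ℝ) < k := by exact_mod_cast hk
    have hkh : (0:ℝ) < k * hl := mul_pos hkpos hhl
    have step1 : R k ≤ 6 * Real.sqrt d / (k * hl) * E := hR k hk
    have step2 : 6 * Real.sqrt d / (k * hl) * E
        ≤ 6 * Real.sqrt d / (k * hl) * (4 * C₂ * (2 * hl) ^ r) := by
      apply mul_le_mul_of_nonneg_left hE
      positivity
    have heq : 6 * Real.sqrt d / (k * hl) * (4 * C₂ * (2 * hl) ^ r)
        = 24 * 2 ^ r * C₂ * Real.sqrt d / (k * hl ^ ((1 : ℝ) - r)) := by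
      rw [Real.mul_rpow (by norm_num) hhl.le,
        Real.rpow_sub hhl, Real.rpow_one]
      field_simp
      ring_nf
    calc R k ≤ _ := step1
      _ ≤ _ := step2
      _ = _ := heq
  refine ⟨key, fun k hk hkb => ?_⟩
  have hkpos : (0:ℝ) < k := by exact_mod_cast hk
  have hh : (0:ℝ) < hl ^ ((1:ℝ) - r) := Real.rpow_pos_of_pos hhl _
  have hB : (0:ℝ) ≤ 24 * 2 ^ r * C₂ * Real.sqrt d := by positivity
  have : 24 * 2 ^ r * C₂ * Real.sqrt d / (k * hl ^ ((1 : ℝ) - r)) ≤ εl := by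
    rw [div_le_iff₀ (by positivity)]
    rw [div_le_iff₀ (by positivity)] at hkb
    nlinarith [hkb, hε.le, hh.le]
  exact (key k hk).trans this
end
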